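/- arXiv:1607.04868 — 10 statements merged into one kernel-verified Lean document; each statement's English description precedes it below -/
import Mathlib

section
/- Let M be a finite matroid on ground set E. For every subset X of E, X is a union of cocircuits of M (possibly the empty union) if and only if for every circuit C of M the intersection X ∩ C does not have exactly one element. -/
/-!
An element `e ∈ X` lies in a circuit meeting `X` only in `e` exactly when `e` is spanned by the
complement `E \ X`. If it is not, extend a basis of `E \ X` by `e` to a base `B`: the fundamental
cocircuit `E \ cl(B \ {e})` contains `e` and misses `E \ X ⊆ cl(B \ {e})`, hence lies in `X`.
So every element of such an `X` lies in a cocircuit inside `X`. The converse is circuit–cocircuit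
orthogonality.
-/

/-- A circuit of a matroid is a minimal dependent set. -/
def Matroid.IsCircuit' {α : Type*} (M : Matroid α) (C : Set α) : Prop :=
  Minimal M.Dep C

open Set

namespace Matroid

variable {α : Type*} {M : Matroid α} {C X : Set α} {e : α}

lemma isCircuit'_iff_isCircuit : M.IsCircuit' C ↔ M.IsCircuit C := Iff.rfl

lemma exists_isCircuit_inter_eq_singleton_of_mem_closure_compl (heX : e ∈ X)
    (he : e ∈ M.closure (M.E \ X)) : ∃ C, M.IsCircuit C ∧ X ∩ C = {e} := by
  obtain ⟨C, hCX, hC, heC⟩ := M.exists_isCircuit_of_mem_closure he fun h ↦ h.2 heX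
  refine ⟨C, hC, subset_antisymm (fun x ⟨hxX, hxC⟩ ↦ ?_) (singleton_subset_iff.2 ⟨heX, heC⟩)⟩
  obtain rfl | hx := hCX hxC
  · rfl
  · exact absurd hxX hx.2

lemma exists_isCocircuit_mem_subset_of_notMem_closure_compl (hX : X ⊆ M.E) (heX : e ∈ X)
    (he : e ∉ M.closure (M.E \ X)) : ∃ K, M.IsCocircuit K ∧ e ∈ K ∧ K ⊆ X := by
  obtain ⟨I, hI⟩ := M.exists_isBasis (M.E \ X)
  have heI : e ∉ I := fun h ↦ (hI.subset h).2 heX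
  have hins : M.Indep (insert e I) := by
    rw [hI.indep.insert_indep_iff_of_notMem heI, hI.closure_eq_closure]
    exact ⟨hX heX, he⟩
  obtain ⟨B, hB, hIB⟩ := hins.exists_isBase_superset
  have heB : e ∈ B := hIB (mem_insert e I)
  have hcompl : M.E \ X ⊆ M.closure (B \ {e}) :=
    hI.subset_closure.trans (M.closure_subset_closure
      (subset_sdiff_singleton ((subset_insert e I).trans hIB) heI))
  refine ⟨_, hB.compl_closure_sdiff_singleton_isCocircuit heB,
    ⟨hX heX, hB.indep.notMem_closure_sdiff_of_mem heB⟩, fun x ⟨hxE, hxcl⟩ ↦ ?_⟩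
  by_contra hxX
  exact hxcl (hcompl ⟨hxE, hxX⟩)

theorem exists_isCocircuit_sUnion_eq_iff (hX : X ⊆ M.E) :
    (∃ 𝒦 : Set (Set α), (∀ K ∈ 𝒦, M.IsCocircuit K) ∧ X = ⋃₀ 𝒦) ↔
      ∀ C, M.IsCircuit C → ∀ e, X ∩ C ≠ {e} := by
  refine ⟨?_, fun h ↦ ⟨{K | M.IsCocircuit K ∧ K ⊆ X}, fun K hK ↦ hK.1, ?_⟩⟩
  · rintro ⟨𝒦, h𝒦, rfl⟩ C hC e hXC
    obtain ⟨K, hK𝒦, heK⟩ := (hXC.symm.subset rfl).1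
    refine hC.inter_isCocircuit_ne_singleton (e := e) (h𝒦 K hK𝒦) (subset_antisymm ?_ ?_)
    · exact fun x ⟨hxC, hxK⟩ ↦ hXC.subset ⟨⟨K, hK𝒦, hxK⟩, hxC⟩
    · exact singleton_subset_iff.2 ⟨(hXC.symm.subset rfl).2, heK⟩
  refine subset_antisymm (fun e heX ↦ ?_) (sUnion_subset fun K hK ↦ hK.2)
  have he : e ∉ M.closure (M.E \ X) := fun he ↦
    have ⟨C, hC, hXC⟩ := exists_isCircuit_inter_eq_singleton_of_mem_closure_compl heX he
    h C hC e hXC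
  obtain ⟨K, hK, heK, hKX⟩ := exists_isCocircuit_mem_subset_of_notMem_closure_compl hX heX he
  exact ⟨K, ⟨hK, hKX⟩, heK⟩

end Matroid

theorem union_of_cocircuits_iff_no_circuit_meets_in_one_general {α : Type*}
    (M : Matroid α) (X : Set α) (hX : X ⊆ M.E) :
    (∃ 𝒞 : Set (Set α), (∀ C ∈ 𝒞, M✶.IsCircuit' C) ∧ X = ⋃₀ 𝒞) ↔
      ∀ C : Set α, M.IsCircuit' C → (X ∩ C).encard ≠ 1 := by
  simp only [Matroid.isCircuit'_iff_isCircuit, ne_eq, encard_eq_one, not_exists]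
  exact Matroid.exists_isCocircuit_sUnion_eq_iff hX

/-- For a finite matroid `M` and `X ⊆ M.E`, `X` is a union of cocircuits
(circuits of the dual matroid) iff `X` meets no circuit of `M` in exactly
one element. -/
theorem union_of_cocircuits_iff_no_circuit_meets_in_one {α : Type*}
    (M : Matroid α) (hM : M.Finite) (X : Set α) (hX : X ⊆ M.E) :
    (∃ 𝒞 : Set (Set α), (∀ C ∈ 𝒞, M✶.IsCircuit' C) ∧ X = ⋃₀ 𝒞) ↔
      ∀ C : Set α, M.IsCircuit' C → (X ∩ C).encard ≠ 1 :=
  union_of_cocircuits_iff_no_circuit_meets_in_one_general M X hX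
end

section
/- Let K be a field and E a finite set, and let W be a linear subspace of the space K^E of functions E → K. Then W is spanned by the set of its nonzero elements of minimal support, i.e., by { w ∈ W : w ≠ 0 and there is no nonzero v ∈ W with support(v) strictly contained in support(w) }. -/
/-!
Induction on the size of the support. If `w ∈ W` is not of minimal support, some nonzero
`v ∈ W` has strictly smaller support; choosing `e` with `v e ≠ 0`, the vector `w - (w e / v e) • v`
lies in `W` and its support misses `e`, so `w` is a combination of two vectors of `W` with
strictly smaller supports.
-/

open Function Submodule

section

variable {K E : Type*} [DivisionRing K]

def Submodule.minimalSupportElements (W : Submodule K (E → K)) : Set (E → K) :=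
  {w : E → K | w ∈ W ∧ w ≠ 0 ∧
    ¬∃ v : E → K, v ∈ W ∧ v ≠ 0 ∧ support v ⊂ support w}

theorem support_sub_smul_subset_diff {v w : E → K} {e : E} (hve : v e ≠ 0)
    (hvw : support v ⊆ support w) :
    support (w - (w e / v e) • v) ⊆ support w \ {e} := by
  intro x hx
  refine ⟨fun hwx => hx ?_, fun hxe => hx ?_⟩
  · have hvx : v x = 0 := notMem_support.mp fun h => hvw h hwx
    simp [hwx, hvx]
  · rw [Set.mem_singleton_iff.mp hxe]
    simp [hve]

theorem Submodule.mem_span_minimalSupportElements {W : Submodule K (E → K)} {w : E → K}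
    (hw : w ∈ W) (hfin : (support w).Finite) :
    w ∈ span K W.minimalSupportElements := by
  induction hn : (support w).ncard using Nat.strong_induction_on generalizing w with
  | _ n ih =>
  by_cases hw0 : w = 0
  · simp [hw0]
  by_cases hmin : ∃ v : E → K, v ∈ W ∧ v ≠ 0 ∧ support v ⊂ support w
  · obtain ⟨v, hvW, hv0, hvw⟩ := hmin
    obtain ⟨e, hve⟩ := support_nonempty_iff.mpr hv0
    set u := w - (w e / v e) • v
    have huW : u ∈ W := W.sub_mem hw (W.smul_mem _ hvW)
    have hu_sub : support u ⊆ support w \ {e} := support_sub_smul_subset_diff hve hvw.subset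
    have hu_lt : (support u).ncard < n := hn ▸
      (Set.ncard_le_ncard hu_sub hfin.sdiff).trans_lt
        (Set.ncard_sdiff_singleton_lt_of_mem (hvw.subset hve) hfin)
    have hv_lt : (support v).ncard < n := hn ▸ Set.ncard_lt_ncard hvw hfin
    rw [← sub_add_cancel w ((w e / v e) • v)]
    exact add_mem (ih _ hu_lt huW (hfin.subset (hu_sub.trans Set.sdiff_subset)) rfl)
      (smul_mem _ _ (ih _ hv_lt hvW (hfin.subset hvw.subset) rfl))
  · exact subset_span ⟨hw, hw0, hmin⟩

end

/-- A linear subspace `W` of `K^E` (for `K` a field and `E` finite) is spanned by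
its nonzero elements of minimal support. -/
theorem span_minimal_support_eq {K E : Type*} [Field K] [Fintype E]
    (W : Submodule K (E → K)) :
    Submodule.span K {w : E → K | w ∈ W ∧ w ≠ 0 ∧
      ¬∃ v : E → K, v ∈ W ∧ v ≠ 0 ∧ Function.support v ⊂ Function.support w} = W :=
  le_antisymm (span_le.mpr fun _ hw => hw.1)
    fun _ hw => mem_span_minimalSupportElements hw (Set.toFinite _)
end

section
/- Let K be a field, E a finite set, and V a linear subspace of K^E. Let V^⊥ = { y ∈ K^E : Σ_{e∈E} v(e)·y(e) = 0 for all v ∈ V }. Then for x ∈ K^E, x belongs to V if and only if Σ_{e∈E} x(e)·y(e) = 0 for every nonzero y ∈ V^⊥ whose support is minimal among the supports of nonzero elements of V^⊥. -/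
/-!
The nonzero vectors of minimal support in a subspace `W ⊆ K^E` span `W`: if `y ∈ W` is not of
minimal support, some nonzero `z ∈ W` has `supp z ⊊ supp y`, and subtracting from `y` the
multiple of `z` that agrees with `y` at a point of `supp z` yields a vector of `W` with strictly
smaller support. Hence `x` is orthogonal to all of `V^⊥`, and `V^⊥⊥ = V` because the dot product
is a nondegenerate symmetric form.
-/

open Function

/-- The `K`-circuits of `W` (its elementary vectors). -/
def Submodule.circuits {R ι : Type*} [Semiring R] (W : Submodule R (ι → R)) : Set (ι → R) :=
  {y | y ∈ W ∧ y ≠ 0 ∧ ¬∃ z ∈ W, z ≠ 0 ∧ support z ⊂ support y}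

section Circuits

variable {R ι : Type*} [DivisionRing R]

theorem Function.support_sub_smul_ssubset {y z : ι → R} (hzy : support z ⊆ support y) {e : ι}
    (he : z e ≠ 0) : support (y - (y e / z e) • z) ⊂ support y := by
  refine Set.ssubset_iff_of_subset ?_ |>.2 ⟨e, hzy he, ?_⟩
  · refine (support_sub _ _).trans (Set.union_subset le_rfl ?_)
    exact (support_const_smul_subset _ _).trans hzy
  · simp [div_mul_cancel₀ _ he]

theorem Submodule.mem_span_circuits [Finite ι] {W : Submodule R (ι → R)} {y : ι → R}
    (hy : y ∈ W) : y ∈ span R W.circuits := by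
  refine WellFounded.induction (C := fun y ↦ y ∈ W → y ∈ span R W.circuits)
    (wellFounded_lt.onFun (f := support)) y (fun y ih hy ↦ ?_) hy
  by_cases hy0 : y = 0
  · exact hy0 ▸ zero_mem _
  by_cases hmin : ∃ z ∈ W, z ≠ 0 ∧ support z ⊂ support y
  · obtain ⟨z, hz, hz0, hzy⟩ := hmin
    obtain ⟨e, he⟩ := Function.ne_iff.1 hz0
    have hdrop := support_sub_smul_ssubset hzy.subset he
    rw [← sub_add_cancel y ((y e / z e) • z)]
    exact add_mem (ih _ hdrop (sub_mem hy (smul_mem W _ hz))) (smul_mem _ _ (ih z hzy hz))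
  · exact subset_span ⟨hy, hy0, hmin⟩

end Circuits

section DotProduct

variable {K E : Type*} [Field K] [Fintype E]

theorem dotProductBilin_isRefl : (dotProductBilin K K : LinearMap.BilinForm K (E → K)).IsRefl :=
  fun x y h ↦ by simpa [dotProduct_comm] using h

theorem dotProductBilin_nondegenerate :
    (dotProductBilin K K : LinearMap.BilinForm K (E → K)).Nondegenerate := by
  classical
  refine dotProductBilin_isRefl.nondegenerate_iff_separatingLeft.2 fun x hx ↦ funext fun e ↦ ?_
  simpa using hx (Pi.single e 1)

end DotProduct

/-- For a field `K`, a finite set `E`, and a subspace `V` of `K^E`: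
`x ∈ V` iff `x` is orthogonal (w.r.t. the standard bilinear form) to every
nonzero element of `V^⊥` whose support is minimal among supports of nonzero
elements of `V^⊥`. -/
theorem mem_iff_orthogonal_minimal_support {K E : Type*} [Field K] [Fintype E]
    (V : Submodule K (E → K)) (x : E → K) :
    x ∈ V ↔
      ∀ y : E → K, (∀ v ∈ V, ∑ e, v e * y e = 0) → y ≠ 0 →
        (¬∃ z : E → K, (∀ v ∈ V, ∑ e, v e * z e = 0) ∧ z ≠ 0 ∧
          Function.support z ⊂ Function.support y) →
        ∑ e, x e * y e = 0 := by
  set B : LinearMap.BilinForm K (E → K) := dotProductBilin K K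
  refine ⟨fun hx y hy _ _ ↦ hy x hx, fun h ↦ ?_⟩
  have hcircuits : (B.orthogonal V).circuits ⊆ LinearMap.ker (B x) :=
    fun y ⟨hy, hy0, hmin⟩ ↦ h y hy hy0 hmin
  rw [← LinearMap.BilinForm.orthogonal_orthogonal (B := B) dotProductBilin_nondegenerate
    dotProductBilin_isRefl V]
  exact fun y hy ↦ dotProductBilin_isRefl x y
    (Submodule.span_le.2 hcircuits (Submodule.mem_span_circuits hy))
end

section
/- Let K be a finite field and let a_1, …, a_n be an enumeration (without repetition) of the nonzero elements of K. Index coordinates by the set E = {p, q} ⊔ {1,…,n} and define u, w ∈ K^E by u(p) = 1, u(q) = 0, u(j) = 1 for all j ∈ {1,…,n}, and w(p) = 0, w(q) = 1, w(j) = a_j for all j ∈ {1,…,n}. Then every vector in the linear span of {u, w} has at least one zero coordinate. -/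
theorem exists_apply_eq_zero_of_mem_span_pair {ι K : Type*} [Semiring K] {u w : ι → K}
    (h : ∀ c d : K, ∃ e, c * u e + d * w e = 0) {x : ι → K}
    (hx : x ∈ Submodule.span K {u, w}) : ∃ e, x e = 0 := by
  obtain ⟨c, d, rfl⟩ := Submodule.mem_span_pair.1 hx
  simpa using h c d

theorem span_two_rows_has_zero_coord_general {K : Type*} [Field K]
    (n : ℕ) (a : Fin n → K)
    (ha_surj : ∀ x : K, x ≠ 0 → ∃ j, a j = x)
    (u w : (Fin 2 ⊕ Fin n) → K)
    (hu : u = Sum.elim ![1, 0] (fun _ => 1))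
    (hw : w = Sum.elim ![0, 1] a) :
    ∀ x ∈ Submodule.span K ({u, w} : Set ((Fin 2 ⊕ Fin n) → K)),
      ∃ e : Fin 2 ⊕ Fin n, x e = 0 := by
  intro x hx
  subst hu hw
  refine exists_apply_eq_zero_of_mem_span_pair (fun c d => ?_) hx
  by_cases hd : d = 0
  · exact ⟨Sum.inl 1, by simp [hd]⟩
  by_cases hc : c = 0
  · exact ⟨Sum.inl 0, by simp [hc]⟩
  -- the coordinate `j` reads `c + d * a j`, which vanishes where `a j = -c / d`
  obtain ⟨j, hj⟩ := ha_surj (-c / d) (div_ne_zero (neg_ne_zero.2 hc) hd)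
  refine ⟨Sum.inr j, ?_⟩
  simp only [Sum.elim_inr, hj, mul_one]
  field_simp
  ring

/-- Let `K` be a finite field and `a : Fin n → K` an enumeration without
repetition of the nonzero elements of `K`. With coordinates indexed by
`Fin 2 ⊕ Fin n`, let `u = (1, 0, 1, …, 1)` and `w = (0, 1, a 0, …, a (n-1))`.
Then every vector in the span of `{u, w}` has a zero coordinate. -/
theorem span_two_rows_has_zero_coord {K : Type*} [Field K] [Fintype K]
    (n : ℕ) (a : Fin n → K)
    (ha_inj : Function.Injective a)
    (ha_ne : ∀ j, a j ≠ 0)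
    (ha_surj : ∀ x : K, x ≠ 0 → ∃ j, a j = x)
    (u w : (Fin 2 ⊕ Fin n) → K)
    (hu : u = Sum.elim ![1, 0] (fun _ => 1))
    (hw : w = Sum.elim ![0, 1] a) :
    ∀ x ∈ Submodule.span K ({u, w} : Set ((Fin 2 ⊕ Fin n) → K)),
      ∃ e : Fin 2 ⊕ Fin n, x e = 0 :=
  span_two_rows_has_zero_coord_general n a ha_surj u w hu hw
end

section
/- Let F be a commutative hyperfield satisfying 1 ⊞ (−1) = F. Let k ≥ 1 and a_1, …, a_k ∈ F with a_1 ≠ 0. If 0 belongs to the iterated hypersum a_1 ⊞ ⋯ ⊞ a_k, then the iterated hypersum a_1 ⊞ ⋯ ⊞ a_k equals all of F. -/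
/-- A commutative hyperfield: a set with multivalued addition and ordinary
multiplication making the nonzero elements a commutative group. -/
structure CommHyperfield (F : Type*) where
  add : F → F → Set F
  mul : F → F → F
  zero : F
  one : F
  neg : F → F
  zero_ne_one : zero ≠ one
  add_nonempty : ∀ x y, (add x y).Nonempty
  add_comm : ∀ x y, add x y = add y x
  add_assoc : ∀ x y z, (⋃ w ∈ add x y, add w z) = ⋃ w ∈ add y z, add x w
  zero_add : ∀ x, add zero x = {x}
  neg_mem : ∀ x, zero ∈ add x (neg x)
  neg_unique : ∀ x y, zero ∈ add x y → y = neg x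
  reversible : ∀ x y z, x ∈ add y z ↔ z ∈ add x (neg y)
  mul_comm : ∀ x y, mul x y = mul y x
  mul_assoc : ∀ x y z, mul (mul x y) z = mul x (mul y z)
  one_mul : ∀ x, mul one x = x
  exists_inv : ∀ x, x ≠ zero → ∃ y, mul x y = one
  zero_mul : ∀ x, mul zero x = zero
  distrib : ∀ a x y, (mul a) '' (add x y) = add (mul a x) (mul a y)

/-- The iterated hypersum of a list: the empty hypersum is `{0}`, and
`a₁ ⊞ ⋯ ⊞ a_{m+1} = ⋃_{x ∈ a₁ ⊞ ⋯ ⊞ a_m} x ⊞ a_{m+1}`. -/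
def CommHyperfield.hyperSum {F : Type*} (H : CommHyperfield F) (l : List F) : Set F :=
  l.foldl (fun S a => ⋃ x ∈ S, H.add x a) {H.zero}

/-!
By associativity and commutativity, `a₁ ⊞ ⋯ ⊞ a_k = ⋃_{x ∈ T} x ⊞ a₁` with
`T = a₂ ⊞ ⋯ ⊞ a_k`. If `0 ∈ x ⊞ a₁` then `x = -a₁`, so the hypersum contains `a₁ ⊞ (-a₁) = a₁ · (1 ⊞ (-1))`, which is all of `F`
because multiplication by `a₁ ≠ 0` is a bijection.
-/

namespace CommHyperfield

variable {F : Type*} (H : CommHyperfield F)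

def setAdd (S : Set F) (b : F) : Set F := ⋃ x ∈ S, H.add x b

lemma setAdd_setAdd_comm (S : Set F) (b c : F) :
    H.setAdd (H.setAdd S b) c = H.setAdd (H.setAdd S c) b := by
  have add_add_comm (x : F) :
      (⋃ w ∈ H.add x b, H.add w c) = ⋃ w ∈ H.add x c, H.add w b := by
    rw [H.add_assoc x b c, H.add_assoc x c b, H.add_comm b c]
  simp only [setAdd, Set.biUnion_iUnion, add_add_comm]

lemma foldl_setAdd (l : List F) (S : Set F) (b : F) :
    l.foldl H.setAdd (H.setAdd S b) = H.setAdd (l.foldl H.setAdd S) b := by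
  induction l generalizing S with
  | nil => rfl
  | cons c l ih => rw [List.foldl_cons, H.setAdd_setAdd_comm, ih, List.foldl_cons]

lemma hyperSum_cons (b : F) (l : List F) :
    H.hyperSum (b :: l) = H.setAdd (H.hyperSum l) b :=
  H.foldl_setAdd l {H.zero} b

lemma neg_neg (x : F) : H.neg (H.neg x) = x :=
  (H.neg_unique _ _ (H.add_comm x _ ▸ H.neg_mem x)).symm

lemma eq_neg_of_zero_mem_add {x y : F} (h : H.zero ∈ H.add x y) : x = H.neg y := by
  rw [H.neg_unique x y h, H.neg_neg]

lemma mul_neg_one (x : F) : H.mul x (H.neg H.one) = H.neg x := by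
  have h := Set.mem_image_of_mem (H.mul x) (H.neg_mem H.one)
  rw [H.distrib, H.mul_comm x H.one, H.one_mul, H.mul_comm x H.zero, H.zero_mul] at h
  exact H.neg_unique _ _ h

lemma mul_left_surjective {x : F} (hx : x ≠ H.zero) : Function.Surjective (H.mul x) := by
  obtain ⟨y, hy⟩ := H.exists_inv x hx
  exact fun z => ⟨H.mul y z, by rw [← H.mul_assoc, hy, H.one_mul]⟩

lemma add_neg_eq_univ (hinf : H.add H.one (H.neg H.one) = Set.univ)
    {x : F} (hx : x ≠ H.zero) : H.add x (H.neg x) = Set.univ := by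
  have h := H.distrib x H.one (H.neg H.one)
  rw [hinf, Set.image_univ_of_surjective (H.mul_left_surjective hx), H.mul_comm x H.one,
    H.one_mul, H.mul_neg_one] at h
  exact h.symm

lemma setAdd_eq_univ_of_zero_mem (hinf : H.add H.one (H.neg H.one) = Set.univ)
    {S : Set F} {b : F} (hb : b ≠ H.zero) (h0 : H.zero ∈ H.setAdd S b) :
    H.setAdd S b = Set.univ := by
  obtain ⟨x, hxS, hx0⟩ := Set.mem_iUnion₂.1 h0
  rw [H.eq_neg_of_zero_mem_add hx0] at hxS
  refine Set.eq_univ_of_univ_subset fun z hz => Set.mem_biUnion hxS ?_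
  rwa [H.add_comm, H.add_neg_eq_univ hinf hb]

end CommHyperfield

/-- In a commutative hyperfield satisfying `1 ⊞ (-1) = F`, any iterated
hypersum `a₁ ⊞ ⋯ ⊞ a_k` with `a₁ ≠ 0` which contains `0` equals all of `F`. -/
theorem inflation_hyperSum {F : Type*} (H : CommHyperfield F)
    (hinf : H.add H.one (H.neg H.one) = Set.univ)
    (k : ℕ) (hk : 1 ≤ k) (a : Fin k → F) (ha : a ⟨0, hk⟩ ≠ H.zero)
    (h0 : H.zero ∈ H.hyperSum (List.ofFn a)) :
    H.hyperSum (List.ofFn a) = Set.univ := by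
  obtain ⟨n, rfl⟩ : ∃ n, k = n + 1 := ⟨k - 1, by omega⟩
  rw [List.ofFn_succ, H.hyperSum_cons] at h0 ⊢
  exact H.setAdd_eq_univ_of_zero_mem hinf ha h0
end

section
/- Let k ≥ 1 and let s_1 ≤ s_2 ≤ ⋯ ≤ s_k be nonnegative real numbers. Then 0 belongs to the iterated triangle hypersum s_1 ⊞ ⋯ ⊞ s_k if and only if s_k ≤ s_1 + ⋯ + s_{k−1}. -/
/-- Hyperaddition in the triangle hyperfield `△` on the nonnegative reals:
`x ⊞ y = {z : |x − y| ≤ z ≤ x + y}`. -/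
def triAdd (x y : ℝ) : Set ℝ := {z | |x - y| ≤ z ∧ z ≤ x + y}

/-- The iterated hypersum of a list: the empty hypersum is `{0}`, and
`s₁ ⊞ ⋯ ⊞ s_{m+1} = ⋃_{x ∈ s₁ ⊞ ⋯ ⊞ s_m} x ⊞ s_{m+1}`. -/
def hyperSum (add : ℝ → ℝ → Set ℝ) (l : List ℝ) : Set ℝ :=
  l.foldl (fun S a => ⋃ x ∈ S, add x a) {0}

/-!
A length `z` lies in `s₁ ⊞ ⋯ ⊞ s_k` exactly when `s₁, …, s_k, z` satisfy the polygon
inequalities: `0 ≤ z ≤ ∑ sᵢ` and `2 sⱼ ≤ ∑ sᵢ + z` for every `j`. Induct on `k`: for the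
step, `z` lies in `x ⊞ s` for some admissible `x` iff it does so for the largest candidate
`x = min (∑ sᵢ) (s + z)`. For `z = 0` and sorted terms, only `j = k` matters.
-/

lemma hyperSum_nil (add : ℝ → ℝ → Set ℝ) : hyperSum add [] = {0} := rfl

lemma hyperSum_append_singleton (add : ℝ → ℝ → Set ℝ) (l : List ℝ) (s : ℝ) :
    hyperSum add (l ++ [s]) = ⋃ x ∈ hyperSum add l, add x s := by
  simp [hyperSum, List.foldl_append]

theorem mem_hyperSum_triAdd_iff {l : List ℝ} (hl : ∀ x ∈ l, 0 ≤ x) {z : ℝ} :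
    z ∈ hyperSum triAdd l ↔ 0 ≤ z ∧ z ≤ l.sum ∧ ∀ x ∈ l, 2 * x ≤ l.sum + z := by
  induction l using List.reverseRecOn generalizing z with
  | nil =>
    simp only [hyperSum_nil, Set.mem_singleton_iff, List.sum_nil, List.not_mem_nil,
      IsEmpty.forall_iff, implies_true, and_true]
    exact ⟨fun h => ⟨h.ge, h.le⟩, fun h => le_antisymm h.2 h.1⟩
  | append_singleton l s ih =>
    simp only [List.mem_append, List.mem_singleton] at hl
    have hs : 0 ≤ s := hl s (Or.inr rfl)
    have hsum : 0 ≤ l.sum := List.sum_nonneg fun y hy => hl y (Or.inl hy)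
    have hle_sum : ∀ y ∈ l, y ≤ l.sum := List.single_le_sum fun y hy => hl y (Or.inl hy)
    rw [hyperSum_append_singleton, Set.mem_iUnion₂]
    simp only [ih fun y hy => hl y (Or.inl hy), List.sum_append, List.sum_singleton,
      List.mem_append, List.mem_singleton, or_imp, forall_and, forall_eq, triAdd,
      Set.mem_ofPred_eq, abs_le, exists_prop]
    constructor
    · rintro ⟨x, ⟨hx0, hxS, hx⟩, ⟨hzx, hxz⟩, hzs⟩
      exact ⟨by linarith, by linarith, fun y hy => by linarith [hx y hy], by linarith⟩
    · rintro ⟨hz0, hzS, hy, hsz⟩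
      have hx : ∀ c, c ≤ l.sum → c ≤ s + z → c ≤ min l.sum (s + z) := fun _ => le_min
      refine ⟨min l.sum (s + z), ⟨hx 0 hsum (by linarith), min_le_left _ _, fun y hy' => ?_⟩,
        ⟨?_, ?_⟩, ?_⟩
      · linarith [hx (2 * y - l.sum) (by linarith [hle_sum y hy']) (by linarith [hy y hy'])]
      · linarith [hx (s - z) (by linarith) (by linarith)]
      · linarith [min_le_right l.sum (s + z)]
      · linarith [hx (z - s) (by linarith) (by linarith)]

/-- For nonnegative reals `s 0 ≤ s 1 ≤ ⋯ ≤ s n`, zero belongs to the iterated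
triangle hypersum `s 0 ⊞ ⋯ ⊞ s n` iff the largest term is at most the sum of
the others. -/
theorem triangle_hyperSum_zero_mem_iff (n : ℕ) (s : Fin (n + 1) → ℝ)
    (hnn : ∀ j, 0 ≤ s j) (hmono : Monotone s) :
    0 ∈ hyperSum triAdd (List.ofFn s) ↔
      s (Fin.last n) ≤ ∑ j : Fin n, s (Fin.castSucc j) := by
  rw [mem_hyperSum_triAdd_iff (List.forall_mem_ofFn_iff.mpr hnn), List.sum_ofFn,
    List.forall_mem_ofFn_iff, Fin.sum_univ_castSucc]
  constructor
  · rintro ⟨-, -, h⟩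
    linarith [h (Fin.last n)]
  · intro h
    have hrest : 0 ≤ ∑ j : Fin n, s (Fin.castSucc j) := Finset.sum_nonneg fun j _ => hnn _
    refine ⟨le_rfl, by linarith [hnn (Fin.last n)], fun i => ?_⟩
    linarith [hmono (Fin.le_last i)]
end

section
/- Let k ≥ 1 and let s_1, …, s_k be real numbers. Then 0 belongs to the iterated tropical-real hypersum s_1 ⊞ ⋯ ⊞ s_k if and only if there exist indices j_1, j_2 (not necessarily distinct) such that s_{j_1} = −s_{j_2} and |s_{j_1}| = max_{1≤j≤k} |s_j|. -/
/-- Hyperaddition in the tropical real hyperfield `𝕋ℝ` on `ℝ`: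
`x ⊞ y = {x}` if `|x| > |y|` or `x = y`, `x ⊞ y = {y}` if `|x| < |y|`, and
`x ⊞ y = {z : |z| ≤ |x|}` if `x = −y`. -/
def trAdd (x y : ℝ) : Set ℝ :=
  if |x| > |y| then {x}
  else if |x| < |y| then {y}
  else if x = y then {x}
  else {z | |z| ≤ |x|}

/-!
Every set that occurs while a hypersum is accumulated is either a closed ball `[-|a|, |a|]` or a
singleton `{a}`, where `a` is a term of maximal modulus seen so far: adding `b` keeps the set if
`|b| < |a|`, replaces it by `{b}` if `|a| < |b|`, and turns it into the ball when `b = -a`. So the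
hypersum is the ball, and hence contains `0`, exactly when a maximal-modulus term has its opposite
among the terms; otherwise it is `{a}` with `a ≠ 0`.
-/

open Metric

section trAdd

variable {a b x y z r : ℝ}

lemma trAdd_eq_left_of_abs_lt (h : |b| < |a|) : trAdd a b = {a} := if_pos h

lemma trAdd_eq_right_of_abs_lt (h : |a| < |b|) : trAdd a b = {b} := by
  rw [trAdd, if_neg h.not_gt, if_pos h]

lemma trAdd_self (a : ℝ) : trAdd a a = {a} := by
  simp [trAdd]

lemma trAdd_neg_right (a : ℝ) : trAdd a (-a) = closedBall 0 |a| := by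
  rcases eq_or_ne a 0 with rfl | ha
  · simp [trAdd_self]
  · have ha' : a ≠ -a := fun h => ha (by linarith)
    ext z
    simp [trAdd, ha', Real.norm_eq_abs]

lemma abs_le_max_of_mem_trAdd (h : z ∈ trAdd x y) : |z| ≤ max |x| |y| := by
  unfold trAdd at h
  split_ifs at h <;> simp only [Set.mem_singleton_iff, Set.mem_ofPred_eq] at h
  all_goals first | exact h.trans (le_max_left _ _) | subst h; simp

lemma iUnion_closedBall_trAdd_of_abs_le (h : |b| ≤ r) :
    ⋃ x ∈ closedBall 0 r, trAdd x b = closedBall 0 r := by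
  ext z
  simp only [Set.mem_iUnion, mem_closedBall_zero_iff, Real.norm_eq_abs, exists_prop]
  refine ⟨fun ⟨x, hx, hz⟩ => (abs_le_max_of_mem_trAdd hz).trans (max_le hx h), fun hz => ?_⟩
  rcases lt_or_ge |b| |z| with hbz | hzb
  · exact ⟨z, hz, by simp [trAdd_eq_left_of_abs_lt hbz]⟩
  · -- every `z` of modulus at most `|b|` lies in `(-b) ⊞ b`
    refine ⟨-b, by rwa [abs_neg], ?_⟩
    rw [show trAdd (-b) b = closedBall 0 |b| by simpa using trAdd_neg_right (-b)]
    simpa using hzb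

lemma iUnion_closedBall_trAdd_of_lt_abs (hr : 0 ≤ r) (h : r < |b|) :
    ⋃ x ∈ closedBall 0 r, trAdd x b = {b} := by
  have hx : ∀ x ∈ closedBall (0 : ℝ) r, trAdd x b = {b} := fun x hx =>
    trAdd_eq_right_of_abs_lt <| by
      rw [mem_closedBall_zero_iff, Real.norm_eq_abs] at hx
      linarith
  rw [Set.iUnion₂_congr hx, Set.biUnion_const ⟨0, mem_closedBall_self hr⟩]

end trAdd

/-- A state `(a, o)` records a term `a` of maximal modulus so far and whether `-a` occurs. -/
noncomputable def trStep (s : ℝ × Bool) (b : ℝ) : ℝ × Bool :=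
  if |b| < |s.1| then s
  else if |s.1| < |b| then (b, false)
  else (s.1, s.2 || decide (b = -s.1))

def trStateSet : ℝ × Bool → Set ℝ
  | (a, true) => closedBall 0 |a|
  | (a, false) => {a}

lemma zero_mem_trStateSet_iff (s : ℝ × Bool) : 0 ∈ trStateSet s ↔ s.2 = true ∨ s.1 = 0 := by
  obtain ⟨a, _ | _⟩ := s <;> simp [trStateSet, eq_comm]

lemma iUnion_trStateSet_trAdd (s : ℝ × Bool) (b : ℝ) :
    ⋃ x ∈ trStateSet s, trAdd x b = trStateSet (trStep s b) := by
  obtain ⟨a, _ | _⟩ := s <;> unfold trStep <;> dsimp only <;> split_ifs with hba hab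
  · simp [trStateSet, trAdd_eq_left_of_abs_lt hba]
  · simp [trStateSet, trAdd_eq_right_of_abs_lt hab]
  · by_cases hb : b = -a
    · simp [trStateSet, hb, trAdd_neg_right]
    · obtain rfl : b = a := (abs_eq_abs.mp (by linarith)).resolve_right hb
      simp [trStateSet, trAdd_self, hb]
  · exact iUnion_closedBall_trAdd_of_abs_le hba.le
  · exact iUnion_closedBall_trAdd_of_lt_abs (abs_nonneg a) hab
  · simpa [trStateSet] using iUnion_closedBall_trAdd_of_abs_le (not_lt.mp hab)

lemma hyperSum_trAdd_eq (l : List ℝ) :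
    hyperSum trAdd l = trStateSet (l.foldl trStep (0, true)) := by
  have h0 : trStateSet (0, true) = {0} := by simp [trStateSet]
  rw [hyperSum, ← h0]
  exact List.foldl_hom trStateSet iUnion_trStateSet_trAdd

def IsTrStateOf (L : List ℝ) (s : ℝ × Bool) : Prop :=
  s.1 ∈ L ∧ (∀ c ∈ L, |c| ≤ |s.1|) ∧ (s.2 = true ↔ -s.1 ∈ L)

namespace IsTrStateOf

variable {L : List ℝ} {s : ℝ × Bool}

lemma trStep (h : IsTrStateOf L s) (b : ℝ) : IsTrStateOf (L ++ [b]) (trStep s b) := by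
  obtain ⟨a, o⟩ := s
  obtain ⟨ha, hmax, hflag⟩ := h
  unfold _root_.trStep
  dsimp only at ha hmax hflag ⊢
  split_ifs with hba hab
  · have hnb : -a ≠ b := fun h => by rw [← h, abs_neg] at hba; exact hba.false
    exact ⟨by simp [ha], List.forall_mem_append.mpr ⟨hmax, by simpa using hba.le⟩,
      by simp [hflag, hnb]⟩
  · have hnb : -b ∉ L := fun h => by have := hmax _ h; rw [abs_neg] at this; linarith
    have hb : -b ≠ b := fun h => by
      have : b = 0 := by linarith
      rw [this, abs_zero] at hab; linarith [abs_nonneg a]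
    refine ⟨by simp, List.forall_mem_append.mpr ⟨fun c hc => (hmax c hc).trans hab.le, by simp⟩,
      ?_⟩
    simp only [Bool.false_eq_true, false_iff, List.mem_append, List.mem_singleton, not_or]
    exact ⟨hnb, hb⟩
  · exact ⟨by simp [ha], List.forall_mem_append.mpr ⟨hmax, by simpa using not_lt.mp hab⟩,
      by simp [hflag, @eq_comm _ (-a)]⟩

lemma foldl (h : IsTrStateOf L s) (l : List ℝ) : IsTrStateOf (L ++ l) (l.foldl _root_.trStep s) := by
  induction l generalizing L s with
  | nil => simpa using h
  | cons b l ih => simpa using ih (h.trStep b)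

lemma zero_mem_trStateSet_iff {l : List ℝ} (h : IsTrStateOf (0 :: l) s) (hl : l ≠ []) :
    0 ∈ trStateSet s ↔ ∃ c ∈ l, -c ∈ l ∧ ∀ d ∈ l, |d| ≤ |c| := by
  obtain ⟨a, o⟩ := s
  obtain ⟨ha, hmax, hflag⟩ := h
  simp only [List.forall_mem_cons] at hmax
  simp only [List.mem_cons, neg_eq_zero] at ha hflag
  rw [_root_.zero_mem_trStateSet_iff]
  dsimp only
  rw [hflag, or_comm, ← or_assoc, or_self]
  constructor
  · intro hopp
    by_cases ha0 : a = 0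
    · subst ha0
      obtain ⟨c, hc⟩ := List.exists_mem_of_ne_nil l hl
      have hzero : ∀ d ∈ l, d = 0 := fun d hd => abs_nonpos_iff.mp (by simpa using hmax.2 d hd)
      obtain rfl := hzero c hc
      exact ⟨0, hc, by simpa using hc, fun d hd => by simp [hzero d hd]⟩
    · exact ⟨a, ha.resolve_left ha0, hopp.resolve_left ha0, hmax.2⟩
  · rintro ⟨c, hc, hnc, hcmax⟩
    have hac : |a| = |c| := le_antisymm
      (ha.elim (fun h => by simp [h]) (hcmax a)) (hmax.2 c hc)
    rcases abs_eq_abs.mp hac with rfl | rfl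
    · exact Or.inr hnc
    · exact Or.inr (by simpa using hc)

end IsTrStateOf

theorem zero_mem_hyperSum_trAdd_iff {l : List ℝ} (hl : l ≠ []) :
    0 ∈ hyperSum trAdd l ↔ ∃ c ∈ l, -c ∈ l ∧ ∀ d ∈ l, |d| ≤ |c| := by
  -- the empty hypersum `{0}` acts like the hypersum of `[0]`
  have hinit : IsTrStateOf [0] (0, true) := by simp [IsTrStateOf]
  rw [hyperSum_trAdd_eq]
  exact (hinit.foldl l).zero_mem_trStateSet_iff hl

/-- For reals `s 0, …, s n`, zero belongs to the iterated tropical-real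
hypersum `s 0 ⊞ ⋯ ⊞ s n` iff two terms of maximal absolute value are
opposite (not necessarily at distinct indices). -/
theorem tropicalReal_hyperSum_zero_mem_iff (n : ℕ) (s : Fin (n + 1) → ℝ) :
    0 ∈ hyperSum trAdd (List.ofFn s) ↔
      ∃ j₁ j₂ : Fin (n + 1), s j₁ = -s j₂ ∧ ∀ j, |s j| ≤ |s j₁| := by
  rw [zero_mem_hyperSum_trAdd_iff (by simp)]
  simp only [List.forall_mem_ofFn_iff]
  simp only [List.mem_ofFn]
  constructor
  · rintro ⟨_, ⟨j₁, rfl⟩, ⟨j₂, h⟩, hmax⟩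
    exact ⟨j₁, j₂, by rw [h, neg_neg], hmax⟩
  · rintro ⟨j₁, j₂, h, hmax⟩
    exact ⟨s j₁, ⟨j₁, rfl⟩, ⟨j₂, by rw [h, neg_neg]⟩, hmax⟩
end

section
/- Let E be a finite set and let X, Y, Z : E → ℝ. Define (X ∘ Y)(e) = X(e) if |X(e)| ≥ |Y(e)| and (X ∘ Y)(e) = Y(e) otherwise. If 0 belongs to the iterated tropical-real hypersum of the family (X(e)·Z(e))_{e∈E} and 0 belongs to the iterated tropical-real hypersum of the family (Y(e)·Z(e))_{e∈E}, then 0 belongs to the iterated tropical-real hypersum of the family ((X ∘ Y)(e)·Z(e))_{e∈E}. -/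
/-!
The tropical real hypersum of a list is the singleton of its entry of maximal modulus `m`,
unless `m` is attained by entries of both signs, in which case it is the whole interval
`[-m, m]` (and it is `{0}` for the empty list). So `0` is in the hypersum exactly when the list
is empty or balanced in this sense. The entries of `(X ∘ Y) Z` have modulus
`max |X e Z e| |Y e Z e|`, and by the tie-breaking rule of `X ∘ Y`, its entries of maximal
modulus coincide with those of `X Z` or of `Y Z`, whichever has the larger maximal modulus
(`X Z` on ties); hence balance passes to `(X ∘ Y) Z`.
-/

theorem mem_hyperSum_append {add : ℝ → ℝ → Set ℝ} {l : List ℝ} {a z : ℝ} :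
    z ∈ hyperSum add (l ++ [a]) ↔ ∃ x ∈ hyperSum add l, z ∈ add x a := by
  simp [hyperSum, List.foldl_append]

namespace TropicalReal

theorem mem_trAdd_iff {x a z : ℝ} :
    z ∈ trAdd x a ↔ (z = x ∧ |a| ≤ |x|) ∨ (z = a ∧ |x| ≤ |a|) ∨ (x = -a ∧ |z| ≤ |a|) := by
  unfold trAdd
  split_ifs <;> simp only [Set.mem_singleton_iff, Set.mem_ofPred_eq] <;>
    grind [abs_neg, abs_nonpos_iff, abs_eq_abs]

theorem mem_trAdd_left {x a : ℝ} (h : |a| ≤ |x|) : x ∈ trAdd x a :=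
  mem_trAdd_iff.2 (Or.inl ⟨rfl, h⟩)

theorem mem_trAdd_right {x a : ℝ} (h : |x| ≤ |a|) : a ∈ trAdd x a :=
  mem_trAdd_iff.2 (Or.inr (Or.inl ⟨rfl, h⟩))

theorem mem_trAdd_neg_self {a z : ℝ} (h : |z| ≤ |a|) : z ∈ trAdd (-a) a :=
  mem_trAdd_iff.2 (Or.inr (Or.inr ⟨rfl, h⟩))

theorem forall_abs_le_append_singleton {l : List ℝ} {a c : ℝ} (hl : ∀ b ∈ l, |b| ≤ c)
    (ha : |a| ≤ c) : ∀ b ∈ l ++ [a], |b| ≤ c :=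
  List.forall_mem_append.2 ⟨hl, List.forall_mem_singleton.2 ha⟩

theorem exists_mem_cons_zero_abs_le (l : List ℝ) : ∃ w ∈ 0 :: l, ∀ b ∈ l, |b| ≤ |w| := by
  obtain ⟨w, hw, hmax⟩ := (0 :: l).toFinset.exists_max_image abs ⟨0, by simp⟩
  exact ⟨w, List.mem_toFinset.1 hw, fun b hb => hmax b (by simp [hb])⟩

theorem mem_of_mem_append_singleton_of_abs_lt {l : List ℝ} {a b : ℝ} (hb : b ∈ l ++ [a])
    (hab : |a| < |b|) : b ∈ l := by
  rcases List.mem_append.1 hb with hb | hb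
  · exact hb
  · rw [List.mem_singleton.1 hb] at hab
    exact (lt_irrefl _ hab).elim

theorem mem_hyperSum_of_dominant {l : List ℝ} {z : ℝ} (hz : z ∈ 0 :: l)
    (hdom : ∀ b ∈ l, |b| ≤ |z|) : z ∈ hyperSum trAdd l := by
  induction l using List.reverseRecOn generalizing z with
  | nil => exact List.mem_singleton.1 hz
  | append_singleton l a ih =>
    rw [List.forall_mem_append, List.forall_mem_singleton] at hdom
    refine mem_hyperSum_append.2 ?_
    rcases List.mem_append.1 (show z ∈ (0 :: l) ++ [a] from hz) with hz | hz
    · exact ⟨z, ih hz hdom.1, mem_trAdd_left hdom.2⟩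
    · obtain ⟨w, hw, hwdom⟩ := exists_mem_cons_zero_abs_le l
      rw [List.mem_singleton.1 hz] at hdom ⊢
      refine ⟨w, ih hw hwdom, mem_trAdd_right ?_⟩
      rcases List.mem_cons.1 hw with rfl | hw
      · simp
      · exact hdom.1 w hw

theorem mem_hyperSum_of_balanced {l : List ℝ} {v z : ℝ} (hv : v ∈ l) (hnv : -v ∈ l)
    (hdom : ∀ b ∈ l, |b| ≤ |v|) (hz : |z| ≤ |v|) : z ∈ hyperSum trAdd l := by
  induction l using List.reverseRecOn generalizing z with
  | nil => simp at hv
  | append_singleton l a ih =>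
    rw [List.forall_mem_append, List.forall_mem_singleton] at hdom
    refine mem_hyperSum_append.2 ?_
    rcases hdom.2.lt_or_eq with hav | hav
    · have ih {y : ℝ} (hy : |y| ≤ |v|) : y ∈ hyperSum trAdd l :=
        ih (mem_of_mem_append_singleton_of_abs_lt hv hav)
          (mem_of_mem_append_singleton_of_abs_lt hnv (by rwa [abs_neg])) hdom.1 hy
      rcases lt_or_ge |a| |z| with haz | hza
      · exact ⟨z, ih hz, mem_trAdd_left haz.le⟩
      · exact ⟨-a, ih (by rw [abs_neg]; exact hdom.2), mem_trAdd_neg_self hza⟩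
    · have hna : -a ∈ 0 :: l := by
        have h : -a ∈ l ++ [a] := by
          rcases abs_eq_abs.1 hav with rfl | rfl
          · exact hnv
          · rwa [neg_neg]
        rcases List.mem_append.1 h with h | h
        · exact List.mem_cons_of_mem 0 h
        · rw [neg_eq_self.1 (List.mem_singleton.1 h), neg_zero]
          exact List.mem_cons_self
      refine ⟨-a, mem_hyperSum_of_dominant hna ?_, mem_trAdd_neg_self (hav ▸ hz)⟩
      rw [abs_neg, hav]
      exact hdom.1

theorem dominant_or_balanced_of_mem_hyperSum {l : List ℝ} {z : ℝ} (hz : z ∈ hyperSum trAdd l) :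
    (z ∈ 0 :: l ∧ ∀ b ∈ l, |b| ≤ |z|) ∨
      ∃ v ∈ l, -v ∈ l ∧ (∀ b ∈ l, |b| ≤ |v|) ∧ |z| ≤ |v| := by
  induction l using List.reverseRecOn generalizing z with
  | nil => exact Or.inl ⟨List.mem_singleton.2 hz, by simp⟩
  | append_singleton l a ih =>
    obtain ⟨x, hx, hzx⟩ := mem_hyperSum_append.1 hz
    have ha : a ∈ l ++ [a] := List.mem_append_right l (List.mem_singleton_self a)
    rcases mem_trAdd_iff.1 hzx with ⟨rfl, hax⟩ | ⟨hza, hxa⟩ | ⟨rfl, hza⟩ <;>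
      rcases ih hx with ⟨hx0, hxdom⟩ | ⟨v, hv, hnv, hvdom, hxv⟩
    · exact Or.inl ⟨List.mem_append_left [a] hx0, forall_abs_le_append_singleton hxdom hax⟩
    · exact Or.inr ⟨v, List.mem_append_left _ hv, List.mem_append_left _ hnv,
        forall_abs_le_append_singleton hvdom (hax.trans hxv), hxv⟩
    · subst z
      exact Or.inl ⟨List.mem_cons_of_mem 0 ha,
        forall_abs_le_append_singleton (fun b hb => (hxdom b hb).trans hxa) le_rfl⟩
    · subst z
      rcases le_or_gt |v| |a| with hva | hav
      · exact Or.inl ⟨List.mem_cons_of_mem 0 ha,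
          forall_abs_le_append_singleton (fun b hb => (hvdom b hb).trans hva) le_rfl⟩
      · exact Or.inr ⟨v, List.mem_append_left _ hv, List.mem_append_left _ hnv,
          forall_abs_le_append_singleton hvdom hav.le, hav.le⟩
    · have hna : -a ∈ l ++ [a] := by
        rcases List.mem_cons.1 hx0 with h | h
        · simp [neg_eq_zero.1 h]
        · exact List.mem_append_left _ h
      rw [abs_neg] at hxdom
      exact Or.inr ⟨a, ha, hna, forall_abs_le_append_singleton hxdom le_rfl, hza⟩
    · rw [abs_neg] at hxv
      exact Or.inr ⟨v, List.mem_append_left _ hv, List.mem_append_left _ hnv,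
        forall_abs_le_append_singleton hvdom hxv, hza.trans hxv⟩

theorem mem_hyperSum_iff {l : List ℝ} {z : ℝ} :
    z ∈ hyperSum trAdd l ↔ (z ∈ 0 :: l ∧ ∀ b ∈ l, |b| ≤ |z|) ∨
      ∃ v ∈ l, -v ∈ l ∧ (∀ b ∈ l, |b| ≤ |v|) ∧ |z| ≤ |v| := by
  refine ⟨dominant_or_balanced_of_mem_hyperSum, ?_⟩
  rintro (⟨hz, hdom⟩ | ⟨v, hv, hnv, hdom, hzv⟩)
  · exact mem_hyperSum_of_dominant hz hdom
  · exact mem_hyperSum_of_balanced hv hnv hdom hzv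

def Balanced (l : List ℝ) : Prop := ∃ v ∈ l, -v ∈ l ∧ ∀ b ∈ l, |b| ≤ |v|

theorem zero_mem_hyperSum_iff {l : List ℝ} : 0 ∈ hyperSum trAdd l ↔ l = [] ∨ Balanced l := by
  rw [mem_hyperSum_iff]
  constructor
  · rintro (⟨-, hdom⟩ | ⟨v, hv, hnv, hdom, -⟩)
    · rcases l with _ | ⟨b, l⟩
      · exact Or.inl rfl
      · have hdom : ∀ c ∈ b :: l, c = 0 := fun c hc => abs_nonpos_iff.1 (by simpa using hdom c hc)
        refine Or.inr ⟨b, List.mem_cons_self, ?_, fun c hc => by simp [hdom c hc]⟩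
        simp [hdom b List.mem_cons_self]
    · exact Or.inr ⟨v, hv, hnv, hdom⟩
  · rintro (rfl | ⟨v, hv, hnv, hdom⟩)
    · simp
    · exact Or.inr ⟨v, hv, hnv, hdom, by simp⟩

theorem balanced_map_of_agree {E : Type*} {L : List E} {f g : E → ℝ} {v : ℝ}
    (hv : v ∈ L.map f) (hnv : -v ∈ L.map f) (hagree : ∀ e ∈ L, |f e| = |v| → g e = f e)
    (hdom : ∀ e ∈ L, |g e| ≤ |v|) : Balanced (L.map g) := by
  have hmem : ∀ w ∈ L.map f, |w| = |v| → w ∈ L.map g := by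
    intro w hw hwv
    obtain ⟨e, he, rfl⟩ := List.mem_map.1 hw
    exact List.mem_map.2 ⟨e, he, hagree e he hwv⟩
  exact ⟨v, hmem v hv rfl, hmem (-v) hnv (abs_neg v), List.forall_mem_map.2 hdom⟩

end TropicalReal

theorem abs_ite_abs_le_mul (x y z : ℝ) :
    |(if |y| ≤ |x| then x else y) * z| = max |x * z| |y * z| := by
  rw [abs_mul, abs_mul, abs_mul, ← max_mul_of_nonneg _ _ (abs_nonneg z), apply_ite abs]
  split_ifs with h
  · rw [max_eq_left h]
  · rw [max_eq_right (not_le.1 h).le]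

theorem ite_abs_le_mul_of_le {x y z : ℝ} (h : |y * z| ≤ |x * z|) :
    (if |y| ≤ |x| then x else y) * z = x * z := by
  rcases eq_or_ne z 0 with rfl | hz
  · simp
  rw [abs_mul, abs_mul] at h
  rw [if_pos (le_of_mul_le_mul_right h (abs_pos.2 hz))]

theorem ite_abs_le_mul_of_lt {x y z : ℝ} (h : |x * z| < |y * z|) :
    (if |y| ≤ |x| then x else y) * z = y * z := by
  rw [abs_mul, abs_mul] at h
  rw [if_neg fun hyx => h.not_ge (mul_le_mul_of_nonneg_right hyx (abs_nonneg z))]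

open TropicalReal in
/-- Tropical-real case of the max-composition proposition: if `X` and `Y` are
both orthogonal to `Z` (i.e. `0` is in the iterated tropical-real hypersums of
`(X e * Z e)` and `(Y e * Z e)`), then so is the composition `X ∘ Y`, where
`(X ∘ Y)(e) = X e` if `|X e| ≥ |Y e|` and `(X ∘ Y)(e) = Y e` otherwise. -/
theorem tropicalReal_max_composition {E : Type*} [Fintype E] (X Y Z : E → ℝ)
    (hXZ : 0 ∈ hyperSum trAdd ((Finset.univ : Finset E).toList.map fun e => X e * Z e))
    (hYZ : 0 ∈ hyperSum trAdd ((Finset.univ : Finset E).toList.map fun e => Y e * Z e)) :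
    0 ∈ hyperSum trAdd ((Finset.univ : Finset E).toList.map fun e =>
      (if |Y e| ≤ |X e| then X e else Y e) * Z e) := by
  simp only [zero_mem_hyperSum_iff, List.map_eq_nil_iff] at hXZ hYZ ⊢
  rcases hXZ with hE | ⟨vX, hvX, hnvX, hdomX⟩
  · exact Or.inl hE
  rcases hYZ with hE | ⟨vY, hvY, hnvY, hdomY⟩
  · exact Or.inl hE
  rw [List.forall_mem_map] at hdomX hdomY
  have hdom : ∀ e ∈ (Finset.univ : Finset E).toList,
      |(if |Y e| ≤ |X e| then X e else Y e) * Z e| ≤ max |vX| |vY| := fun e he =>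
    (abs_ite_abs_le_mul _ _ _).trans_le (max_le_max (hdomX e he) (hdomY e he))
  right
  rcases le_or_gt |vY| |vX| with hle | hlt
  · rw [max_eq_left hle] at hdom
    refine balanced_map_of_agree hvX hnvX (fun e he hvXe => ite_abs_le_mul_of_le ?_) hdom
    exact (hdomY e he).trans (hle.trans hvXe.ge)
  · rw [max_eq_right hlt.le] at hdom
    refine balanced_map_of_agree hvY hnvY (fun e he hvYe => ite_abs_le_mul_of_lt ?_) hdom
    exact (hdomX e he).trans_lt (hlt.trans_eq hvYe.symm)
end

section
/- Let E be a finite set and X, Y, Z : E → ℝ. Suppose 0 belongs to the iterated tropical-real hypersum of (X(e)·Z(e))_{e∈E} and 0 belongs to the iterated tropical-real hypersum of (Y(e)·Z(e))_{e∈E}. Then there exists ε > 0 such that for all η with 0 < η < ε, the vector X_η defined by X_η(e) = X(e) if X(e) ≠ 0 and X_η(e) = η·Y(e) if X(e) = 0 satisfies: 0 belongs to the iterated tropical-real hypersum of (X_η(e)·Z(e))_{e∈E}. -/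
/-! `0 ∈ x₁ ⊞ ⋯ ⊞ xₙ` holds exactly when the entries of maximal modulus occur with both signs
(`IsTropBalanced`). This follows from reversibility, `z ∈ x₁ ⊞ ⋯ ⊞ xₙ ↔ 0 ∈ x₁ ⊞ ⋯ ⊞ xₙ ⊞ (-z)`,
proved by induction on `n`.

Where `X e = 0` the product `X e * Z e` vanishes, and where `Z e = 0` both products do, so
`X_η · Z` is the composition `epsComp (X · Z) (Y · Z) η`. Once `η |Y e Z e|` is below every
nonzero `|X e' Z e'|`, the perturbation leaves the dominant entries of `X · Z` in place; if
`X · Z` vanishes identically it is `η · (Y · Z)`. Either way the balance survives. -/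

open Set Filter Topology

theorem mem_trAdd {x a z : ℝ} :
    z ∈ trAdd x a ↔ (|a| < |x| ∧ z = x) ∨ (|x| < |a| ∧ z = a) ∨ (x = a ∧ z = a) ∨
      (x = -a ∧ |z| ≤ |a|) := by
  unfold trAdd
  have habs : |x| = |a| ↔ x = a ∨ x = -a := abs_eq_abs
  split_ifs <;> simp only [mem_singleton_iff, mem_ofPred_eq] <;> grind [abs_neg]

theorem trAdd_nonempty (x a : ℝ) : (trAdd x a).Nonempty := by
  unfold trAdd
  split_ifs
  · exact singleton_nonempty _
  · exact singleton_nonempty _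
  · exact singleton_nonempty _
  · exact ⟨x, show |x| ≤ |x| from le_rfl⟩

theorem hyperSum_append (add : ℝ → ℝ → Set ℝ) (l : List ℝ) (a : ℝ) :
    hyperSum add (l ++ [a]) = ⋃ x ∈ hyperSum add l, add x a := by
  simp [hyperSum]

def IsTropBalanced (s : Set ℝ) : Prop :=
  ∀ y ∈ s, (∃ b ∈ s, |y| ≤ b) ∧ ∃ b ∈ s, b ≤ -|y|

namespace IsTropBalanced

variable {s : Set ℝ} {a c x z : ℝ}

theorem insert_of_abs_le (h : IsTropBalanced s) (hc : c ∈ s) (hac : |a| ≤ |c|) :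
    IsTropBalanced (insert a s) := by
  rintro y (rfl | hy)
  · obtain ⟨⟨b, hb, hcb⟩, b', hb', hb'c⟩ := h c hc
    exact ⟨⟨b, mem_insert_of_mem _ hb, hac.trans hcb⟩, b', mem_insert_of_mem _ hb', by linarith⟩
  · obtain ⟨⟨b, hb, hyb⟩, b', hb', hb'y⟩ := h y hy
    exact ⟨⟨b, mem_insert_of_mem _ hb, hyb⟩, b', mem_insert_of_mem _ hb', hb'y⟩

theorem of_insert_of_abs_lt (h : IsTropBalanced (insert a s)) (hc : c ∈ s) (hac : |a| < |c|) :
    IsTropBalanced s := by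
  obtain ⟨⟨p, hp, hcp⟩, q, hq, hqc⟩ := h c (mem_insert_of_mem _ hc)
  have hps : p ∈ s := hp.resolve_left fun hpa => by
    subst hpa; linarith [le_abs_self p]
  have hqs : q ∈ s := hq.resolve_left fun hqa => by
    subst hqa; linarith [neg_abs_le q]
  intro y hy
  obtain ⟨⟨b, hb, hyb⟩, b', hb', hb'y⟩ := h y (mem_insert_of_mem _ hy)
  refine ⟨?_, ?_⟩
  · rcases hb with rfl | hb
    · exact ⟨p, hps, by linarith [le_abs_self b]⟩
    · exact ⟨b, hb, hyb⟩
  · rcases hb' with rfl | hb'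
    · exact ⟨q, hqs, by linarith [neg_abs_le b']⟩
    · exact ⟨b', hb', hb'y⟩

theorem insert_neg_insert (h : IsTropBalanced s) : IsTropBalanced (insert (-a) (insert a s)) := by
  have top : ∀ r ≤ |a|, (∃ b ∈ insert (-a) (insert a s), r ≤ b) ∧
      ∃ b ∈ insert (-a) (insert a s), b ≤ -r := by
    intro r hr
    rcases abs_choice a with ha | ha
    · exact ⟨⟨a, by simp, by linarith⟩, -a, by simp, by linarith⟩
    · exact ⟨⟨-a, by simp, by linarith⟩, a, by simp, by linarith⟩
  rintro y (rfl | rfl | hy)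
  · exact top _ (abs_neg a).le
  · exact top _ le_rfl
  · obtain ⟨⟨b, hb, hyb⟩, b', hb', hb'y⟩ := h y hy
    exact ⟨⟨b, by simp [hb], hyb⟩, b', by simp [hb'], hb'y⟩

theorem exists_abs_le_of_insert (h : IsTropBalanced (insert a s)) (ha : a ≠ 0) :
    ∃ c ∈ s, |a| ≤ |c| := by
  obtain ⟨⟨b, hb, hab⟩, b', hb', hb'a⟩ := h a (mem_insert _ _)
  rcases hb with rfl | hb
  · rcases hb' with rfl | hb'
    · linarith [abs_pos.mpr ha]
    · exact ⟨b', hb', by linarith [neg_le_abs b']⟩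
  · exact ⟨b, hb, hab.trans (le_abs_self b)⟩

theorem insert_neg_of_mem_trAdd (h : IsTropBalanced (insert (-x) s)) (hz : z ∈ trAdd x a) :
    IsTropBalanced (insert (-z) (insert a s)) := by
  rcases mem_trAdd.mp hz with ⟨hax, rfl⟩ | ⟨hxa, rfl⟩ | ⟨rfl, rfl⟩ | ⟨rfl, hza⟩
  · rw [insert_comm]
    exact h.insert_of_abs_le (mem_insert _ _) (by rw [abs_neg]; exact hax.le)
  · have h' := h.insert_neg_insert (a := z)
    rw [insert_comm z (-x), insert_comm (-z) (-x)] at h'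
    exact h'.of_insert_of_abs_lt (c := z) (by simp) (by rwa [abs_neg])
  · rw [insert_comm]
    exact h.insert_of_abs_le (mem_insert _ _) (abs_neg _).ge
  · rw [neg_neg] at h
    exact h.insert_of_abs_le (mem_insert _ _) (by rwa [abs_neg])

theorem exists_mem_trAdd {x₀ : ℝ} (hx₀ : IsTropBalanced (insert (-x₀) s))
    (h : IsTropBalanced (insert (-z) (insert a s))) :
    ∃ x, IsTropBalanced (insert (-x) s) ∧ z ∈ trAdd x a := by
  rcases lt_or_ge |a| |z| with haz | hza
  · refine ⟨z, ?_, mem_trAdd.mpr (Or.inl ⟨haz, rfl⟩)⟩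
    rw [insert_comm] at h
    exact h.of_insert_of_abs_lt (mem_insert _ _) (by rwa [abs_neg])
  by_cases has : IsTropBalanced (insert a s)
  · exact ⟨-a, by rwa [neg_neg], mem_trAdd.mpr (Or.inr (Or.inr (Or.inr ⟨rfl, hza⟩)))⟩
  -- Otherwise only `z = a` is possible, and then `x₀` is either `a` or dominated by `a`.
  have hz : z = a := by
    rcases hza.lt_or_eq with hlt | heq
    · exact absurd (h.of_insert_of_abs_lt (mem_insert _ _) (by rwa [abs_neg])) has
    · rcases abs_eq_abs.mp heq with hz | rfl
      · exact hz
      · rw [neg_neg, insert_idem] at h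
        exact absurd h has
  subst hz
  refine ⟨x₀, hx₀, mem_trAdd.mpr ?_⟩
  rcases lt_trichotomy |x₀| |z| with hlt | heq | hgt
  · exact Or.inr (Or.inl ⟨hlt, rfl⟩)
  · rcases abs_eq_abs.mp heq with rfl | rfl
    · exact Or.inr (Or.inr (Or.inl ⟨rfl, rfl⟩))
    · rw [neg_neg] at hx₀
      exact absurd hx₀ has
  · have hx₀0 : -x₀ ≠ 0 := neg_ne_zero.mpr (abs_pos.mp ((abs_nonneg z).trans_lt hgt))
    obtain ⟨c, hc, hxc⟩ := hx₀.exists_abs_le_of_insert hx₀0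
    rw [abs_neg] at hxc
    exact absurd (h.of_insert_of_abs_lt (mem_insert_of_mem _ hc) (by rw [abs_neg]; linarith)) has

end IsTropBalanced

theorem isTropBalanced_singleton_iff {c : ℝ} : IsTropBalanced {c} ↔ c = 0 := by
  constructor
  · intro h
    obtain ⟨⟨b, rfl, hcb⟩, b', rfl, hb'c⟩ := h c rfl
    exact abs_nonpos_iff.mp (by linarith)
  · rintro rfl y rfl
    exact ⟨⟨0, rfl, by simp⟩, 0, rfl, by simp⟩

theorem isTropBalanced_insert_zero_iff {s : Set ℝ} :
    IsTropBalanced (insert 0 s) ↔ IsTropBalanced s := by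
  refine ⟨fun h => ?_, fun h => ?_⟩
  · by_cases hs : ∃ c ∈ s, c ≠ 0
    · obtain ⟨c, hc, hc0⟩ := hs
      exact h.of_insert_of_abs_lt hc (by simpa using hc0)
    · push Not at hs
      intro y hy
      obtain rfl := hs y hy
      exact ⟨⟨0, hy, by simp⟩, 0, hy, by simp⟩
  · rcases s.eq_empty_or_nonempty with rfl | ⟨c, hc⟩
    · rw [insert_empty_eq]
      exact isTropBalanced_singleton_iff.mpr rfl
    · exact h.insert_of_abs_le hc (by simp)

theorem hyperSum_trAdd_nonempty (l : List ℝ) : (hyperSum trAdd l).Nonempty := by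
  induction l using List.reverseRecOn with
  | nil => exact ⟨0, rfl⟩
  | append_singleton l a ih =>
    obtain ⟨x, hx⟩ := ih
    obtain ⟨z, hz⟩ := trAdd_nonempty x a
    exact ⟨z, by rw [hyperSum_append]; exact mem_biUnion hx hz⟩

theorem mem_hyperSum_trAdd_iff (l : List ℝ) (z : ℝ) :
    z ∈ hyperSum trAdd l ↔ IsTropBalanced (insert (-z) {x | x ∈ l}) := by
  induction l using List.reverseRecOn generalizing z with
  | nil => simp [hyperSum, isTropBalanced_singleton_iff]
  | append_singleton l a ih =>
    obtain ⟨x₀, hx₀⟩ := hyperSum_trAdd_nonempty l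
    have hl : {x | x ∈ l ++ [a]} = insert a {x | x ∈ l} := by
      ext
      simp [or_comm]
    simp only [hyperSum_append, mem_iUnion₂, ih, hl, exists_prop]
    exact ⟨fun ⟨x, hx, hz⟩ => hx.insert_neg_of_mem_trAdd hz,
      ((ih x₀).mp hx₀).exists_mem_trAdd⟩

theorem zero_mem_hyperSum_trAdd_iff_s16 (l : List ℝ) :
    0 ∈ hyperSum trAdd l ↔ IsTropBalanced {x | x ∈ l} := by
  rw [mem_hyperSum_trAdd_iff, neg_zero, isTropBalanced_insert_zero_iff]

theorem zero_mem_hyperSum_trAdd_map_toList_iff {E : Type*} [Fintype E] (f : E → ℝ) :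
    0 ∈ hyperSum trAdd ((Finset.univ : Finset E).toList.map f) ↔ IsTropBalanced (range f) := by
  rw [zero_mem_hyperSum_trAdd_iff_s16]
  congr!
  ext
  simp

section EpsComp

variable {ι : Type*}

theorem isTropBalanced_range_iff {f : ι → ℝ} :
    IsTropBalanced (range f) ↔ ∀ i, (∃ j, |f i| ≤ f j) ∧ ∃ j, f j ≤ -|f i| := by
  simp [IsTropBalanced]

noncomputable def epsComp (u v : ι → ℝ) (η : ℝ) (i : ι) : ℝ :=
  if u i ≠ 0 then u i else η * v i

theorem epsComp_of_ne_zero {u v : ι → ℝ} {η : ℝ} {i : ι} (hi : u i ≠ 0) :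
    epsComp u v η i = u i :=
  if_pos hi

theorem epsComp_of_eq_zero {u v : ι → ℝ} {η : ℝ} {i : ι} (hi : u i = 0) :
    epsComp u v η i = η * v i :=
  if_neg (not_not.mpr hi)

theorem epsComp_neg (u v : ι → ℝ) (η : ℝ) : epsComp (-u) (-v) η = -epsComp u v η := by
  ext i
  by_cases hi : u i = 0 <;> simp [epsComp, hi]

theorem epsComp_mul_right (X Y Z : ι → ℝ) (η : ℝ) :
    epsComp (fun e => X e * Z e) (fun e => Y e * Z e) η = fun e => epsComp X Y η e * Z e := by
  ext e
  by_cases hX : X e = 0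
  · simp [epsComp, hX, mul_assoc]
  · by_cases hZ : Z e = 0 <;> simp [epsComp, hX, hZ]

theorem exists_abs_epsComp_le {u v : ι → ℝ} {η : ℝ}
    (hu : ∀ i, ∃ j, |u i| ≤ u j) (hv : ∀ i, ∃ j, |v i| ≤ v j) (hη : 0 ≤ η)
    (hsmall : ∀ i j, u j ≠ 0 → η * |v i| < |u j|) (i : ι) :
    ∃ j, |epsComp u v η i| ≤ epsComp u v η j := by
  have epsComp_eq_abs {j : ι} {r : ℝ} (hr : 0 < r) (hj : r ≤ u j) :
      epsComp u v η j = |u j| := by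
    have hj0 : 0 < u j := hr.trans_le hj
    rw [epsComp_of_ne_zero hj0.ne', abs_of_pos hj0]
  by_cases hi : u i = 0
  · rw [epsComp_of_eq_zero hi, abs_mul, abs_of_nonneg hη]
    by_cases hu0 : ∃ k, u k ≠ 0
    · obtain ⟨k, hk⟩ := hu0
      obtain ⟨j, hj⟩ := hu k
      refine ⟨j, ?_⟩
      rw [epsComp_eq_abs (abs_pos.mpr hk) hj]
      exact (hsmall i j ((abs_pos.mpr hk).trans_le hj).ne').le
    · push Not at hu0
      obtain ⟨j, hj⟩ := hv i
      exact ⟨j, by rw [epsComp_of_eq_zero (hu0 j)]; exact mul_le_mul_of_nonneg_left hj hη⟩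
  · obtain ⟨j, hj⟩ := hu i
    refine ⟨j, ?_⟩
    rw [epsComp_of_ne_zero hi, epsComp_eq_abs (abs_pos.mpr hi) hj]
    exact hj.trans (le_abs_self _)

theorem IsTropBalanced.range_epsComp {u v : ι → ℝ} {η : ℝ}
    (hu : IsTropBalanced (range u)) (hv : IsTropBalanced (range v)) (hη : 0 ≤ η)
    (hsmall : ∀ i j, u j ≠ 0 → η * |v i| < |u j|) :
    IsTropBalanced (range (epsComp u v η)) := by
  rw [isTropBalanced_range_iff] at *
  have up := exists_abs_epsComp_le (fun i => (hu i).1) (fun i => (hv i).1) hη hsmall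
  have down := exists_abs_epsComp_le (u := -u) (v := -v) (η := η)
    (fun i => by simpa [le_neg] using (hu i).2) (fun i => by simpa [le_neg] using (hv i).2) hη
    (by simpa using hsmall)
  refine fun i => ⟨up i, ?_⟩
  obtain ⟨j, hj⟩ := down i
  rw [epsComp_neg, Pi.neg_apply, Pi.neg_apply, abs_neg] at hj
  exact ⟨j, le_neg.mp hj⟩

theorem eventually_mul_abs_lt_abs [Finite ι] (u v : ι → ℝ) :
    ∀ᶠ η in 𝓝 0, ∀ i j, u j ≠ 0 → η * |v i| < |u j| := by
  simp only [eventually_all]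
  intro i j hj
  exact ((continuous_mul_const |v i|).tendsto' 0 0 (zero_mul _)).eventually_lt_const
    (abs_pos.mpr hj)

end EpsComp

/-- Single-circuit tropical-real case of ε-composition: if `X` and `Y` are both
orthogonal to `Z`, then for all sufficiently small `η > 0` the vector `X_η`,
equal to `X e` where `X e ≠ 0` and to `η * Y e` where `X e = 0`, is orthogonal
to `Z`. -/
theorem tropicalReal_eps_composition {E : Type*} [Fintype E] (X Y Z : E → ℝ)
    (hXZ : 0 ∈ hyperSum trAdd ((Finset.univ : Finset E).toList.map fun e => X e * Z e))
    (hYZ : 0 ∈ hyperSum trAdd ((Finset.univ : Finset E).toList.map fun e => Y e * Z e)) :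
    ∃ ε : ℝ, 0 < ε ∧ ∀ η : ℝ, 0 < η → η < ε →
      0 ∈ hyperSum trAdd ((Finset.univ : Finset E).toList.map fun e =>
        (if X e ≠ 0 then X e else η * Y e) * Z e) := by
  rw [zero_mem_hyperSum_trAdd_map_toList_iff] at hXZ hYZ
  obtain ⟨ε, hε, hsmall⟩ := Metric.eventually_nhds_iff.mp
    (eventually_mul_abs_lt_abs (fun e => X e * Z e) (fun e => Y e * Z e))
  refine ⟨ε, hε, fun η hη hηε => ?_⟩
  have h := hXZ.range_epsComp hYZ hη.le (hsmall (by rwa [Real.dist_0_eq_abs, abs_of_pos hη]))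
  rw [epsComp_mul_right] at h
  exact (zero_mem_hyperSum_trAdd_map_toList_iff _).mpr h
end

section
/- Let n ≥ 1 and let x_1, …, x_n be complex numbers with |x_j| = 1 for all j. Then there exist positive real numbers a_1, …, a_n with a_1·x_1 + ⋯ + a_n·x_n = 0 if and only if either (i) there exists a complex number w with |w| = 1 such that every x_j equals w or −w and both w and −w occur among the x_j, or (ii) there is no complex number w with |w| = 1 such that Re(x_j · conj(w)) ≥ 0 for all j. -/
/-!
If `∑ aⱼ xⱼ = 0` with all `aⱼ > 0` and every `xⱼ` lies in the closed half-plane `⟪w, ·⟫ ≥ 0`,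
then every `xⱼ` lies on its boundary line, so `xⱼ = ±iw`, and a positive relation forces both
signs to occur. Conversely, two antipodal values are balanced by weighting each with the number
of occurrences of the other. If no positive relation exists at all, then either the `xⱼ` do not
span `ℂ` over `ℝ`, and a normal to their span bounds a half-plane, or the positive combinations
form an open convex set missing `0`, and Hahn–Banach separation gives the half-plane.
-/

open Complex ComplexConjugate Finset Function InnerProductSpace Set

variable {ι E : Type*} [Fintype ι]

section Module

variable [AddCommGroup E] [Module ℝ E]

theorem exists_pos_sum_smul_eq_zero_of_antipodal {v : ι → E} {u : E}
    (hv : ∀ j, v j = u ∨ v j = -u) (hu : ∃ j, v j = u) (hnu : ∃ j, v j ≠ u) :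
    ∃ a : ι → ℝ, (∀ j, 0 < a j) ∧ ∑ j, a j • v j = 0 := by
  classical
  set p := #{j | v j = u}
  set m := #{j | v j ≠ u}
  obtain ⟨j₁, hj₁⟩ := hu
  obtain ⟨j₂, hj₂⟩ := hnu
  have hp : 0 < p := card_pos.2 ⟨j₁, by simp [hj₁]⟩
  have hm : 0 < m := card_pos.2 ⟨j₂, by simp [hj₂]⟩
  refine ⟨fun j => if v j = u then (m : ℝ) else p,
    fun j => by dsimp only; split_ifs <;> positivity, ?_⟩
  have hneg : ∀ j ∈ ({j | v j ≠ u} : Finset ι), v j = -u := fun j hj =>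
    (hv j).resolve_left (mem_filter.1 hj).2
  calc ∑ j, (if v j = u then (m : ℝ) else p) • v j
      = ∑ j with v j = u, (m : ℝ) • u + ∑ j with v j ≠ u, (p : ℝ) • -u := by
        simp only [ite_smul, sum_ite]
        congr 1
        · exact sum_congr rfl fun j hj => by rw [(mem_filter.1 hj).2]
        · exact sum_congr rfl fun j hj => by rw [hneg j hj]
    _ = 0 := by
        simp only [sum_const, ← Nat.cast_smul_eq_nsmul ℝ]
        module

theorem sum_smul_ne_zero_of_forall_eq [Nonempty ι] {a : ι → ℝ} (ha : ∀ j, 0 < a j) {v : ι → E}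
    {u : E} (hu : u ≠ 0) (hv : ∀ j, v j = u) : ∑ j, a j • v j ≠ 0 := by
  simp only [hv, ← sum_smul]
  exact smul_ne_zero (sum_pos (fun j _ => ha j) univ_nonempty).ne' hu

end Module

section InnerProduct

variable [NormedAddCommGroup E] [InnerProductSpace ℝ E]

theorem inner_eq_zero_of_sum_smul_eq_zero {a : ι → ℝ} (ha : ∀ j, 0 < a j) {v : ι → E}
    (hsum : ∑ j, a j • v j = 0) {w : E} (hw : ∀ j, 0 ≤ ⟪w, v j⟫_ℝ) (j : ι) :
    ⟪w, v j⟫_ℝ = 0 := by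
  have h : ∑ j, a j * ⟪w, v j⟫_ℝ = 0 := by
    simpa only [inner_sum, real_inner_smul_right, inner_zero_right] using congr_arg (⟪w, ·⟫_ℝ) hsum
  have := (sum_eq_zero_iff_of_nonneg fun j _ => mul_nonneg (ha j).le (hw j)).1 h j (mem_univ j)
  exact (mul_eq_zero.1 this).resolve_left (ha j).ne'

variable [FiniteDimensional ℝ E]

theorem exists_ne_zero_forall_inner_nonneg_of_surjective {v : ι → E}
    (hv : Surjective (Fintype.linearCombination ℝ v))
    (h : ¬∃ a : ι → ℝ, (∀ j, 0 < a j) ∧ ∑ j, a j • v j = 0) :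
    ∃ w ≠ 0, ∀ j, 0 ≤ ⟪w, v j⟫_ℝ := by
  classical
  set L := Fintype.linearCombination ℝ v
  set U : Set (ι → ℝ) := univ.pi fun _ => Ioi 0
  have hU : IsOpen U := isOpen_set_pi finite_univ fun _ _ => isOpen_Ioi
  have h0 : (0 : E) ∉ L '' U := by
    rintro ⟨a, ha, ha0⟩
    exact h ⟨a, by simpa [U] using ha, by rwa [Fintype.linearCombination_apply] at ha0⟩
  obtain ⟨f, hf⟩ := geometric_hahn_banach_open_point
    ((convex_pi fun _ _ => convex_Ioi 0).linear_image L)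
    (L.isOpenMap_of_finiteDimensional hv U hU) h0
  have hfL : ∀ a ∈ U, f (L a) < 0 := fun a ha => (map_zero f) ▸ hf _ ⟨a, ha, rfl⟩
  -- the closed orthant contains the standard basis vectors, whose images are the `v j`
  have hfL_le : ∀ a ∈ closure U, f (L a) ≤ 0 :=
    closure_minimal (fun a ha => (hfL a ha).le)
      (isClosed_le (f.continuous.comp L.continuous_of_finiteDimensional) continuous_const)
  refine ⟨-(toDual ℝ E).symm f, fun hf0 => ?_, fun j => ?_⟩
  · have hf0 : f = 0 := by simpa using hf0
    simpa [hf0] using hfL 1 (by simp [U])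
  · rw [inner_neg_left, toDual_symm_apply, neg_nonneg, ← one_smul ℝ (v j),
      ← Fintype.linearCombination_apply_single ℝ v j 1]
    refine hfL_le _ ?_
    rw [closure_pi_set, closure_Ioi]
    exact fun k _ => by by_cases hk : k = j <;> simp [hk]

/-- A weak form of Stiemke's theorem of alternatives. -/
theorem exists_ne_zero_forall_inner_nonneg {v : ι → E}
    (h : ¬∃ a : ι → ℝ, (∀ j, 0 < a j) ∧ ∑ j, a j • v j = 0) :
    ∃ w ≠ 0, ∀ j, 0 ≤ ⟪w, v j⟫_ℝ := by
  by_cases hv : Surjective (Fintype.linearCombination ℝ v)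
  · exact exists_ne_zero_forall_inner_nonneg_of_surjective hv h
  · obtain ⟨w, hw, hw0⟩ := (Submodule.ne_bot_iff _).1 <|
      (Submodule.orthogonal_eq_bot_iff.not.2 (LinearMap.range_eq_top.not.2 hv))
    refine ⟨w, hw0, fun j => (Submodule.inner_left_of_mem_orthogonal ?_ hw).ge⟩
    rw [Fintype.range_linearCombination]
    exact Submodule.subset_span (mem_range_self j)

end InnerProduct

theorem Complex.eq_I_mul_or_eq_neg_I_mul_of_inner_eq_zero {x w : ℂ} (hx : ‖x‖ = 1) (hw : ‖w‖ = 1)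
    (h : ⟪w, x⟫_ℝ = 0) : x = I * w ∨ x = -(I * w) := by
  set z := x * conj w
  have hre : z.re = 0 := by rwa [Complex.inner] at h
  have hz : z = z.im * I := Complex.ext (by simp [hre]) (by simp)
  have him : |z.im| = 1 := by
    have hz1 : ‖z‖ = 1 := by simp [z, hx, hw]
    rwa [hz, norm_mul, norm_I, mul_one, norm_real, Real.norm_eq_abs] at hz1
  have hxz : x = z * w := by rw [mul_assoc, conj_mul', hw]; simp
  rcases abs_eq zero_le_one |>.1 him with h1 | h1
  · left; rw [hxz, hz, h1]; simp
  · right; rw [hxz, hz, h1]; simp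

open Complex in
/-- (Phase diagrams for the phase hyperfield `ℙ`.) For unit complex numbers
`x 0, …, x (n-1)` with `n ≥ 1`, there are positive reals `a j` with
`∑ j, a j * x j = 0` iff either the `x j` consist of exactly two antipodal
values, both occurring, or the `x j` do not all lie in a common closed
half-circle. -/
theorem phase_orthogonality_iff (n : ℕ) (hn : 1 ≤ n) (x : Fin n → ℂ)
    (hx : ∀ j, ‖x j‖ = 1) :
    (∃ a : Fin n → ℝ, (∀ j, 0 < a j) ∧ ∑ j, (a j : ℂ) * x j = 0) ↔
      ((∃ w : ℂ, ‖w‖ = 1 ∧ (∀ j, x j = w ∨ x j = -w) ∧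
          (∃ j, x j = w) ∧ (∃ j, x j = -w)) ∨
        ¬∃ w : ℂ, ‖w‖ = 1 ∧ ∀ j, 0 ≤ (x j * (starRingEnd ℂ) w).re) := by
  have : Nonempty (Fin n) := ⟨⟨0, hn⟩⟩
  simp only [← Complex.real_smul, ← Complex.inner]
  constructor
  · rintro ⟨a, ha, hsum⟩
    refine or_iff_not_imp_right.2 fun hhalf => ?_
    obtain ⟨w, hw, hwx⟩ := not_not.1 hhalf
    have hpm j : x j = I * w ∨ x j = -(I * w) :=
      eq_I_mul_or_eq_neg_I_mul_of_inner_eq_zero (hx j) hw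
        (inner_eq_zero_of_sum_smul_eq_zero ha hsum hwx j)
    have hIw : I * w ≠ 0 := norm_ne_zero_iff.1 (by simp [hw])
    refine ⟨I * w, by simp [hw], hpm, ?_, ?_⟩ <;> by_contra! hne
    · exact sum_smul_ne_zero_of_forall_eq ha (neg_ne_zero.2 hIw)
        (fun j => (hpm j).resolve_left (hne j)) hsum
    · exact sum_smul_ne_zero_of_forall_eq ha hIw (fun j => (hpm j).resolve_right (hne j)) hsum
  · rintro (⟨w, hw, hpm, hp, j, hj⟩ | hhalf)
    · refine exists_pos_sum_smul_eq_zero_of_antipodal hpm hp ⟨j, ?_⟩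
      rw [hj, neg_ne_self]
      exact norm_ne_zero_iff.1 (by simp [hw])
    · by_contra h
      obtain ⟨w, hw0, hw⟩ := exists_ne_zero_forall_inner_nonneg h
      refine hhalf ⟨(‖w‖⁻¹ : ℝ) • w, norm_smul_inv_norm hw0, fun j => ?_⟩
      rw [real_inner_smul_left]
      exact mul_nonneg (by positivity) (hw j)
end
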